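/- Fix ε > 0 and a ∈ ℝ. For every b with 1/2 < b < a, the weighted derivative combination satisfies ω⁺(b) + ω⁻(b) + a·(ω⁺)′(b) − (1−a)·(ω⁻)′(b) > 0 whenever b ∈ (0,1). -/

import Mathlib

/-- The GRPO advantage weight `ω⁺(p) = (1 - p) / (√(p(1-p)) + ε)`. -/
noncomputable def omegaPlus (ε p : ℝ) : ℝ := (1 - p) / (Real.sqrt (p * (1 - p)) + ε)

/-- The GRPO advantage weight `ω⁻(p) = p / (√(p(1-p)) + ε)`. -/
noncomputable def omegaMinus (ε p : ℝ) : ℝ := p / (Real.sqrt (p * (1 - p)) + ε)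

/-! With `s = √(p(1-p))`, so that `s' = (1 - 2p) / (2s)`, the quotient rule gives
`ω⁺ + ω⁻ + a (ω⁺)' - (1 - a) (ω⁻)' = (2p - 1)(a - p) / (2 s (s + ε)²)`,
which is positive as soon as `1/2 < p < a`. -/

open Set

section

variable {ε p : ℝ}

lemma mul_one_sub_pos (hp : p ∈ Ioo (0 : ℝ) 1) : 0 < p * (1 - p) :=
  mul_pos hp.1 (sub_pos.2 hp.2)

lemma hasDerivAt_sqrt_mul_one_sub (hp : p ∈ Ioo (0 : ℝ) 1) :
    HasDerivAt (fun q : ℝ => Real.sqrt (q * (1 - q)))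
      ((1 - 2 * p) / (2 * Real.sqrt (p * (1 - p)))) p := by
  have hpoly : HasDerivAt (fun q : ℝ => q * (1 - q)) (1 - 2 * p) p :=
    ((hasDerivAt_id' p).fun_mul ((hasDerivAt_id' p).const_sub 1)).congr_deriv (by ring)
  exact hpoly.sqrt (mul_one_sub_pos hp).ne'

lemma sqrt_mul_one_sub_add_pos (hε : 0 ≤ ε) (hp : p ∈ Ioo (0 : ℝ) 1) :
    0 < Real.sqrt (p * (1 - p)) + ε :=
  add_pos_of_pos_of_nonneg (Real.sqrt_pos.2 (mul_one_sub_pos hp)) hε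

lemma hasDerivAt_omegaPlus (hε : 0 ≤ ε) (hp : p ∈ Ioo (0 : ℝ) 1) :
    HasDerivAt (omegaPlus ε)
      ((-(Real.sqrt (p * (1 - p)) + ε)
          - (1 - p) * ((1 - 2 * p) / (2 * Real.sqrt (p * (1 - p)))))
        / (Real.sqrt (p * (1 - p)) + ε) ^ 2) p := by
  have hnum : HasDerivAt (fun q : ℝ => 1 - q) (-1) p := by
    simpa using (hasDerivAt_id p).const_sub 1
  exact (hnum.div ((hasDerivAt_sqrt_mul_one_sub hp).add_const ε)
    (sqrt_mul_one_sub_add_pos hε hp).ne').congr_deriv (by ring)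

lemma hasDerivAt_omegaMinus (hε : 0 ≤ ε) (hp : p ∈ Ioo (0 : ℝ) 1) :
    HasDerivAt (omegaMinus ε)
      (((Real.sqrt (p * (1 - p)) + ε)
          - p * ((1 - 2 * p) / (2 * Real.sqrt (p * (1 - p)))))
        / (Real.sqrt (p * (1 - p)) + ε) ^ 2) p :=
  ((hasDerivAt_id p).div ((hasDerivAt_sqrt_mul_one_sub hp).add_const ε)
    (sqrt_mul_one_sub_add_pos hε hp).ne').congr_deriv (by simp only [id, one_mul])

lemma omega_add_deriv_combination_eq (hε : 0 ≤ ε) (hp : p ∈ Ioo (0 : ℝ) 1) (a : ℝ) :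
    omegaPlus ε p + omegaMinus ε p + a * deriv (omegaPlus ε) p
        - (1 - a) * deriv (omegaMinus ε) p
      = (2 * p - 1) * (a - p)
          / (2 * Real.sqrt (p * (1 - p)) * (Real.sqrt (p * (1 - p)) + ε) ^ 2) := by
  rw [(hasDerivAt_omegaPlus hε hp).deriv, (hasDerivAt_omegaMinus hε hp).deriv,
    omegaPlus, omegaMinus]
  have hs : Real.sqrt (p * (1 - p)) ≠ 0 := (Real.sqrt_pos.2 (mul_one_sub_pos hp)).ne'
  have hd := (sqrt_mul_one_sub_add_pos hε hp).ne'
  field_simp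
  ring

end

/-- Fix `ε > 0` and `a ∈ ℝ`.  For every `b` with `1/2 < b < a`, the weighted derivative
combination satisfies `ω⁺(b) + ω⁻(b) + a·(ω⁺)′(b) − (1−a)·(ω⁻)′(b) > 0` whenever
`b ∈ (0,1)`. -/
theorem stmt15 (ε : ℝ) (hε : 0 < ε) (a b : ℝ) (hb2 : 1 / 2 < b) (hba : b < a)
    (hb : b ∈ Set.Ioo (0 : ℝ) 1) :
    0 < omegaPlus ε b + omegaMinus ε b + a * deriv (omegaPlus ε) b
        - (1 - a) * deriv (omegaMinus ε) b := by
  rw [omega_add_deriv_combination_eq hε.le hb a]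
  have hs : 0 < Real.sqrt (b * (1 - b)) := Real.sqrt_pos.2 (mul_one_sub_pos hb)
  have hd := sqrt_mul_one_sub_add_pos hε.le hb
  exact div_pos (mul_pos (by linarith) (by linarith)) (by positivity)
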